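/- arXiv:1912.03159 — 3 statements merged into one kernel-verified Lean document; each statement's English description precedes it below -/
import Mathlib

section
/- Let γ be a positive integer, H ∈ (0,1) a real number, n a natural number, and η_0, …, η_{n-1} ∈ (0,1] real numbers. If ∑_{k<n} ⌈γ·(log η_k / log H)⌉ ≤ γ, then ∏_{k<n} η_k ≥ H. -/
/-! Each ceiling dominates its argument, so the steepness bound gives
`γ · (∑ log η_k) / log H ≤ γ`; dividing by `γ` and then by the negative `log H` yields
`log H ≤ ∑ log η_k = log ∏ η_k`, and `log` is monotone on positive reals. -/

open Finset

theorem sum_le_cast_sum_ceil {ι α : Type*} [Ring α] [LinearOrder α] [IsStrictOrderedRing α]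
    [FloorRing α] (s : Finset ι) (f : ι → α) :
    ∑ i ∈ s, f i ≤ ((∑ i ∈ s, ⌈f i⌉ : ℤ) : α) := by
  push_cast
  exact sum_le_sum fun i _ => Int.le_ceil (f i)

theorem le_sum_of_sum_ceil_mul_div_le {ι : Type*} (s : Finset ι) (a : ι → ℝ) {L : ℝ}
    (hL : L < 0) {γ : ℕ} (hγ : 0 < γ) (h : ∑ i ∈ s, ⌈(γ : ℝ) * (a i / L)⌉ ≤ (γ : ℤ)) :
    L ≤ ∑ i ∈ s, a i := by
  have hscaled : (γ : ℝ) * ((∑ i ∈ s, a i) / L) ≤ γ :=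
    calc (γ : ℝ) * ((∑ i ∈ s, a i) / L) = ∑ i ∈ s, (γ : ℝ) * (a i / L) := by
          rw [sum_div, mul_sum]
      _ ≤ ((∑ i ∈ s, ⌈(γ : ℝ) * (a i / L)⌉ : ℤ) : ℝ) := sum_le_cast_sum_ceil s _
      _ ≤ γ := by exact_mod_cast h
  have hγ' : (0 : ℝ) < γ := by exact_mod_cast hγ
  rw [← div_le_one_of_neg hL]
  exact (mul_le_iff_le_one_right hγ').mp hscaled

/-- Reliability part of Lemma 1: bounded total steepness in the reliability
dimension implies the reliability target is honored. -/
theorem okpi_reliability_honored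
    (γ : ℕ) (hγ : 0 < γ) (H : ℝ) (hH : H ∈ Set.Ioo (0 : ℝ) 1)
    (n : ℕ) (η : ℕ → ℝ) (hη : ∀ k < n, η k ∈ Set.Ioc (0 : ℝ) 1)
    (hsteep : ∑ k ∈ Finset.range n,
        ⌈(γ : ℝ) * (Real.log (η k) / Real.log H)⌉ ≤ (γ : ℤ)) :
    ∏ k ∈ Finset.range n, η k ≥ H := by
  have hpos : ∀ k ∈ range n, 0 < η k := fun k hk => (hη k (mem_range.mp hk)).1
  have hlog : Real.log H ≤ ∑ k ∈ range n, Real.log (η k) :=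
    le_sum_of_sum_ceil_mul_div_le _ _ (Real.log_neg hH.1 hH.2) hγ hsteep
  rw [ge_iff_le, ← Real.log_le_log_iff hH.1 (prod_pos hpos),
    Real.log_prod fun k hk => (hpos k hk).ne']
  exact hlog
end

section
/- Let ι be a nonempty finite index type, c : ι → ℝ, d : ι → ℝ, D a real number with ∑_{i∈ι} d i < D, and p : ι → ℝ with p i > 0 for all i. Then the linear cost function a ↦ ∑_{i∈ι} p i · a i attains a minimum on the nonempty set S = {a : ι → ℝ | (∀ i, a i > c i) ∧ ∑_{i∈ι} (d i + 1/(a i − c i)) ≤ D}, i.e., there exists a* ∈ S such that ∑_i p i · a*_i ≤ ∑_i p i · a_i for all a ∈ S. -/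
/-!
Every feasible `a` has `1 / (a i - c i) ≤ D - ∑ d`, so the feasible set keeps a uniform
distance `1 / (D - ∑ d)` from the poles `a i = c i`; on that region the latency is continuous,
hence the feasible set is closed. A cost with positive weights is coercive on a set bounded
below coordinatewise, so it attains its minimum on any closed nonempty such set.
-/

open Finset Filter

section WeightedSum

variable {ι : Type*} [Fintype ι] {p l a : ι → ℝ}

theorem le_add_div_of_le_of_sum_mul_le (hp : ∀ i, 0 < p i) (hla : l ≤ a) {K : ℝ}
    (hK : ∑ j, p j * a j ≤ K) (i : ι) : a i ≤ l i + (K - ∑ j, p j * l j) / p i := by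
  have hterm : p i * (a i - l i) ≤ ∑ j, p j * (a j - l j) :=
    single_le_sum (f := fun j => p j * (a j - l j))
      (fun j _ => mul_nonneg (hp j).le (sub_nonneg.2 (hla j))) (mem_univ i)
  have hsum : ∑ j, p j * (a j - l j) = ∑ j, p j * a j - ∑ j, p j * l j := by
    simp only [mul_sub, sum_sub_distrib]
  rw [← sub_le_iff_le_add', le_div_iff₀ (hp i), mul_comm]
  linarith

theorem exists_isMinOn_sum_mul_of_isClosed {S : Set (ι → ℝ)} (hS : IsClosed S)
    (hne : S.Nonempty) (hSl : S ⊆ Set.Ici l) (hp : ∀ i, 0 < p i) :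
    ∃ a' ∈ S, IsMinOn (fun a => ∑ i, p i * a i) S a' := by
  obtain ⟨a₀, ha₀⟩ := hne
  have hcont : Continuous fun a : ι → ℝ => ∑ i, p i * a i := by fun_prop
  set u : ι → ℝ := fun i => l i + (∑ j, p j * a₀ j - ∑ j, p j * l j) / p i
  refine hcont.continuousOn.exists_isMinOn' hS ha₀ <|
    (hasBasis_cocompact.inf_principal S).eventually_iff.2 ⟨Set.Icc l u, isCompact_Icc, ?_⟩
  rintro a ⟨haIcc, haS⟩
  by_contra! hlt
  exact haIcc ⟨hSl haS, le_add_div_of_le_of_sum_mul_le hp (hSl haS) hlt.le⟩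

end WeightedSum

section Feasibility

variable {ι : Type*} [Fintype ι] (c d : ι → ℝ) (D : ℝ)

/-- Problem (11): `a i` is the CPU given to the `i`-th M/M/1-PS queue, whose delay
`1 / (a i - c i)` adds to the network delay `d i`. -/
def latencyFeasibleSet : Set (ι → ℝ) :=
  {a | (∀ i, a i > c i) ∧ ∑ i, (d i + 1 / (a i - c i)) ≤ D}

variable {c d D}

theorem latencyFeasibleSet_nonempty (hD : ∑ i, d i < D) :
    (latencyFeasibleSet c d D).Nonempty := by
  set E := D - ∑ i, d i
  have hE : 0 < E := sub_pos.2 hD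
  have hN : (0 : ℝ) < Fintype.card ι + 1 := by positivity
  -- every hop gets the delay `E / (card ι + 1)`, so the delays sum to less than `E`
  refine ⟨fun i => c i + (Fintype.card ι + 1) / E,
    fun i => lt_add_of_pos_right _ (div_pos hN hE), ?_⟩
  simp only [add_sub_cancel_left, one_div_div, sum_add_distrib, sum_const, card_univ, nsmul_eq_mul]
  have hdelays : (Fintype.card ι : ℝ) * (E / (Fintype.card ι + 1)) ≤ E := by
    rw [mul_div_assoc', div_le_iff₀ hN]
    nlinarith
  linarith

theorem add_one_div_le_of_mem_latencyFeasibleSet {a : ι → ℝ}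
    (ha : a ∈ latencyFeasibleSet c d D) (i : ι) : c i + 1 / (D - ∑ j, d j) ≤ a i := by
  obtain ⟨hgt, hsum⟩ := ha
  have hpos : 0 < a i - c i := sub_pos.2 (hgt i)
  have hle : 1 / (a i - c i) ≤ D - ∑ j, d j := by
    have hsingle := single_le_sum (f := fun j => 1 / (a j - c j))
      (fun j _ => (one_div_pos.2 (sub_pos.2 (hgt j))).le) (mem_univ i)
    rw [sum_add_distrib] at hsum
    linarith
  have hslack : 0 < D - ∑ j, d j := (one_div_pos.2 hpos).trans_le hle
  linarith [(one_div_le hpos hslack).1 hle]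

theorem isClosed_latencyFeasibleSet (hD : ∑ i, d i < D) :
    IsClosed (latencyFeasibleSet c d D) := by
  set F : Set (ι → ℝ) := {a | ∀ i, c i + 1 / (D - ∑ j, d j) ≤ a i}
  have hF : IsClosed F := by
    simp only [F, Set.ofPred_forall]
    exact isClosed_iInter fun i => isClosed_le continuous_const (continuous_apply i)
  have hgap : ∀ a ∈ F, ∀ i, a i > c i := fun a ha i => by
    linarith [ha i, one_div_pos.2 (sub_pos.2 hD)]
  have hcont : ContinuousOn (fun a : ι → ℝ => ∑ i, (d i + 1 / (a i - c i))) F := by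
    refine continuousOn_finsetSum _ fun i _ => continuousOn_const.add ?_
    exact continuousOn_const.div (by fun_prop) fun a ha => (sub_pos.2 (hgap a ha i)).ne'
  convert hcont.preimage_isClosed_of_isClosed hF (isClosed_Iic (a := D)) using 1
  ext a
  exact ⟨fun ha => ⟨add_one_div_le_of_mem_latencyFeasibleSet ha, ha.2⟩,
    fun ha => ⟨hgap a ha.1, ha.2⟩⟩

end Feasibility

theorem okpi_cpu_assignment_min_exists_general
    (ι : Type*) [Fintype ι] (c d : ι → ℝ) (D : ℝ)
    (hD : ∑ i, d i < D) (p : ι → ℝ) (hp : ∀ i, 0 < p i) :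
    ∃ a' ∈ {a : ι → ℝ |
        (∀ i, a i > c i) ∧ ∑ i, (d i + 1 / (a i - c i)) ≤ D},
      ∀ a ∈ {a : ι → ℝ |
        (∀ i, a i > c i) ∧ ∑ i, (d i + 1 / (a i - c i)) ≤ D},
        ∑ i, p i * a' i ≤ ∑ i, p i * a i :=
  exists_isMinOn_sum_mul_of_isClosed (isClosed_latencyFeasibleSet hD)
    (latencyFeasibleSet_nonempty hD)
    (fun _ ha i => add_one_div_le_of_mem_latencyFeasibleSet ha i) hp

/-- Existence of an optimal solution to the CPU-assignment problem (11):
the linear CPU cost attains a minimum on the (nonempty) feasible set. -/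
theorem okpi_cpu_assignment_min_exists
    (ι : Type*) [Fintype ι] [Nonempty ι] (c d : ι → ℝ) (D : ℝ)
    (hD : ∑ i, d i < D) (p : ι → ℝ) (hp : ∀ i, 0 < p i) :
    ∃ a' ∈ {a : ι → ℝ |
        (∀ i, a i > c i) ∧ ∑ i, (d i + 1 / (a i - c i)) ≤ D},
      ∀ a ∈ {a : ι → ℝ |
        (∀ i, a i > c i) ∧ ∑ i, (d i + 1 / (a i - c i)) ≤ D},
        ∑ i, p i * a' i ≤ ∑ i, p i * a i :=
  okpi_cpu_assignment_min_exists_general ι c d D hD p hp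
end

section
/- Let n be a natural number and w_0, …, w_{n-1} nonnegative real numbers with ∑_{k<n} w_k < 1. Then there exists a positive integer γ₀ such that for every integer γ ≥ γ₀, ∑_{k<n} ⌈γ·w_k⌉ ≤ γ, where ⌈·⌉ denotes the integer ceiling. -/
/-! Each ceiling exceeds its argument by less than one, so the sum of the `n` ceilings is below
`γ * ∑ w + n`, which is at most `γ` as soon as `γ * (1 - ∑ w) ≥ n`; the strict inequality
`∑ w < 1` makes this hold for all large `γ`. -/

theorem Finset.sum_ceil_le_sum_add_card {ι α : Type*} [Ring α] [LinearOrder α]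
    [IsStrictOrderedRing α] [FloorRing α] (s : Finset ι) (f : ι → α) :
    ((∑ i ∈ s, ⌈f i⌉ : ℤ) : α) ≤ ∑ i ∈ s, f i + s.card := by
  push_cast
  calc ∑ i ∈ s, (⌈f i⌉ : α) ≤ ∑ i ∈ s, (f i + 1) :=
        Finset.sum_le_sum fun i _ => (Int.ceil_lt_add_one (f i)).le
    _ = ∑ i ∈ s, f i + s.card := by simp [Finset.sum_add_distrib]

theorem Finset.sum_ceil_mul_le_of_card_le {ι α : Type*} [Ring α] [LinearOrder α]
    [IsStrictOrderedRing α] [FloorRing α] (s : Finset ι) (f : ι → α) (γ : ℕ)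
    (hcard : (s.card : α) ≤ γ * (1 - ∑ i ∈ s, f i)) :
    ∑ i ∈ s, ⌈(γ : α) * f i⌉ ≤ (γ : ℤ) := by
  have hbound := s.sum_ceil_le_sum_add_card fun i => (γ : α) * f i
  rw [← Finset.mul_sum] at hbound
  rw [mul_sub, mul_one, le_sub_iff_add_le'] at hcard
  exact_mod_cast hbound.trans hcard

theorem okpi_large_resolution_representable_general
    (n : ℕ) (w : ℕ → ℝ)
    (hsum : ∑ k ∈ Finset.range n, w k < 1) :
    ∃ γ₀ : ℕ, 0 < γ₀ ∧ ∀ γ : ℕ, γ₀ ≤ γ →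
      ∑ k ∈ Finset.range n, ⌈(γ : ℝ) * w k⌉ ≤ (γ : ℤ) := by
  have hslack : 0 < 1 - ∑ k ∈ Finset.range n, w k := sub_pos.mpr hsum
  refine ⟨⌈(n : ℝ) / (1 - ∑ k ∈ Finset.range n, w k)⌉₊ + 1, Nat.succ_pos _, fun γ hγ => ?_⟩
  apply Finset.sum_ceil_mul_le_of_card_le
  rw [Finset.card_range, ← div_le_iff₀ hslack]
  calc (n : ℝ) / (1 - ∑ k ∈ Finset.range n, w k)
      ≤ ⌈(n : ℝ) / (1 - ∑ k ∈ Finset.range n, w k)⌉₊ := Nat.le_ceil _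
    _ ≤ γ := by exact_mod_cast (Nat.le_succ _).trans hγ

/-- Every deployment strictly satisfying the additive KPI constraint is
representable in the expanded graph for all sufficiently large resolutions. -/
theorem okpi_large_resolution_representable
    (n : ℕ) (w : ℕ → ℝ) (hw : ∀ k < n, 0 ≤ w k)
    (hsum : ∑ k ∈ Finset.range n, w k < 1) :
    ∃ γ₀ : ℕ, 0 < γ₀ ∧ ∀ γ : ℕ, γ₀ ≤ γ →
      ∑ k ∈ Finset.range n, ⌈(γ : ℝ) * w k⌉ ≤ (γ : ℤ) :=
  okpi_large_resolution_representable_general n w hsum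
end
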